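/- Let {Uⁿ}_{n=0}^N be a CNFD solution and 0 ≤ n ≤ N−1. Then E_h(U^{n+1}) − E_h(Uⁿ) ≤ (λ²ετ/(2ν)) · ‖U^{n+1/2}‖⁴_{4,h}, where U^{n+1/2} = (U^{n+1} + Uⁿ)/2. -/

import Mathlib

noncomputable section

open Finset Complex ComplexConjugate

/-- Membership in the space `X_JK`: complex arrays vanishing on the boundary of the grid. -/
def memX (J K : ℕ) (u : ℕ → ℕ → ℂ) : Prop :=
  (∀ k, u 0 k = 0) ∧ (∀ k, u J k = 0) ∧ (∀ j, u j 0 = 0) ∧ (∀ j, u j K = 0)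

/-- `normP Δx Δy J K p u = ‖u‖_{p,h}^p`. -/
def normP (Δx Δy : ℝ) (J K : ℕ) (p : ℕ) (u : ℕ → ℕ → ℂ) : ℝ :=
  Δx * Δy * ∑ j ∈ range J, ∑ k ∈ range K, ‖u j k‖ ^ p

/-- `gradSq Δx Δy J K u = ‖δ⁺u‖²_{2,h}`. -/
def gradSq (Δx Δy : ℝ) (J K : ℕ) (u : ℕ → ℕ → ℂ) : ℝ :=
  Δx * Δy * ∑ j ∈ range J, ∑ k ∈ range K,
    (‖(u (j + 1) k - u j k) / (Δx : ℂ)‖ ^ 2 +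
      ‖(u j (k + 1) - u j k) / (Δy : ℂ)‖ ^ 2)

/-- The discrete energy `E_h(u)`. -/
def energy (Δx Δy : ℝ) (J K : ℕ) (lam ν : ℝ) (u : ℕ → ℕ → ℂ) : ℝ :=
  gradSq Δx Δy J K u - lam / 2 * normP Δx Δy J K 4 u + ν / 3 * normP Δx Δy J K 6 u

/-- The discrete Laplacian `δ² = δ²_x + δ²_y` (at interior indices). -/
def delta2 (Δx Δy : ℝ) (u : ℕ → ℕ → ℂ) (j k : ℕ) : ℂ :=
  (u (j + 1) k - 2 * u j k + u (j - 1) k) / (Δx : ℂ) ^ 2 +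
    (u j (k + 1) - 2 * u j k + u j (k - 1)) / (Δy : ℂ) ^ 2

/-- `ψ₁(z,w) = ((|z|² + |w|²)/2)·((z+w)/2)`. -/
def psi1 (z w : ℂ) : ℂ :=
  (((‖z‖ ^ 2 + ‖w‖ ^ 2) / 2 : ℝ) : ℂ) * ((z + w) / 2)

/-- `ψ₂(z,w) = ((|z|⁴ + |z|²|w|² + |w|⁴)/3)·((z+w)/2)`. -/
def psi2 (z w : ℂ) : ℂ :=
  (((‖z‖ ^ 4 + ‖z‖ ^ 2 * ‖w‖ ^ 2 + ‖w‖ ^ 4) / 3 : ℝ) : ℂ) *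
    ((z + w) / 2)

/-- `φ(z,w) = |(z+w)/2|²·((z+w)/2)`. -/
def phi (z w : ℂ) : ℂ :=
  ((‖(z + w) / 2‖ ^ 2 : ℝ) : ℂ) * ((z + w) / 2)

/-- One Crank–Nicolson step equation: `W` is the next level, `V` the current one. -/
def stepEq (Δx Δy : ℝ) (J K : ℕ) (lam ν ε τ : ℝ) (W V : ℕ → ℕ → ℂ) : Prop :=
  ∀ j k : ℕ, 1 ≤ j → j ≤ J - 1 → 1 ≤ k → k ≤ K - 1 →
    Complex.I * (W j k - V j k) / (τ : ℂ) +
      delta2 Δx Δy (fun j' k' => (W j' k' + V j' k') / 2) j k +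
      (lam : ℂ) * psi1 (W j k) (V j k) - (ν : ℂ) * psi2 (W j k) (V j k) +
      Complex.I * (ε : ℂ) * phi (W j k) (V j k) = 0

/-- A CNFD solution `U⁰, …, U^N`. -/
def isCNFD (Δx Δy : ℝ) (J K : ℕ) (lam ν ε τ : ℝ) (N : ℕ) (U : ℕ → ℕ → ℕ → ℂ) : Prop :=
  (∀ n, n ≤ N → memX J K (U n)) ∧
    ∀ n, n < N → stepEq Δx Δy J K lam ν ε τ (U (n + 1)) (U n)

/-!
Write `M = U^{n+1/2}`. Pairing the scheme with `conj (U^{n+1} - Uⁿ)`, taking real parts and summing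
by parts, the dispersive, cubic and quintic terms assemble into the energy difference and only the
damping term survives: `E_h(U^{n+1}) - E_h(Uⁿ) = 2ε ΔxΔy Σ |M|² Im (U^{n+1} conj Uⁿ)`.
Pairing the scheme with `conj (|M|² M)` instead gives
`|M|² Im (U^{n+1} conj Uⁿ) = τ Re (δ²M conj (|M|² M)) + τ (λ s - ν t) |M|⁴` with `s² ≤ t`.
The first term sums to `≤ 0` by summation by parts, as `z ↦ |z|² z` is monotone, and completing
the square bounds `λ s - ν t` by `λ²/(4ν)`.
-/

-- `j - 1` truncates to `0` at `j = 0`, so the backward difference vanishes there and no condition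
-- on `g 0` is needed.
theorem sum_range_second_diff_mul_conj (J : ℕ) (f g : ℕ → ℂ) (hg : g J = 0) :
    ∑ j ∈ range J, (f (j + 1) - 2 * f j + f (j - 1)) * conj (g j) =
      -∑ j ∈ range J, (f (j + 1) - f j) * conj (g (j + 1) - g j) := by
  have htel := sum_range_sub (fun j => (f j - f (j - 1)) * conj (g j)) J
  simp only [Nat.add_sub_cancel, hg, map_zero, mul_zero, Nat.zero_sub, sub_self, zero_mul] at htel
  rw [← sub_eq_zero, sub_neg_eq_add, ← sum_add_distrib, ← htel]
  refine sum_congr rfl fun j _ => ?_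
  rcases j with _ | j <;> simp only [Nat.zero_sub, Nat.add_sub_cancel, map_sub] <;> ring

theorem sum_re_delta2_mul_conj (Δx Δy : ℝ) (J K : ℕ) (M g : ℕ → ℕ → ℂ)
    (hgJ : ∀ k, g J k = 0) (hgK : ∀ j, g j K = 0) :
    ∑ j ∈ range J, ∑ k ∈ range K, (delta2 Δx Δy M j k * conj (g j k)).re =
      -∑ j ∈ range J, ∑ k ∈ range K,
        (((M (j + 1) k - M j k) * conj (g (j + 1) k - g j k)).re / Δx ^ 2 +
          ((M j (k + 1) - M j k) * conj (g j (k + 1) - g j k)).re / Δy ^ 2) := by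
  have hx (k : ℕ) := congrArg re (sum_range_second_diff_mul_conj J (M · k) (g · k) (hgJ k))
  have hy (j : ℕ) := congrArg re (sum_range_second_diff_mul_conj K (M j ·) (g j ·) (hgK j))
  simp only [re_sum, neg_re] at hx hy
  have hsplit (j k : ℕ) : (delta2 Δx Δy M j k * conj (g j k)).re =
      ((M (j + 1) k - 2 * M j k + M (j - 1) k) * conj (g j k)).re / Δx ^ 2 +
        ((M j (k + 1) - 2 * M j k + M j (k - 1)) * conj (g j k)).re / Δy ^ 2 := by
    rw [delta2, add_mul, div_mul_eq_mul_div, div_mul_eq_mul_div, add_re, ← ofReal_pow,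
      ← ofReal_pow, div_ofReal_re, div_ofReal_re]
  simp only [hsplit, sum_add_distrib, ← sum_div, hy]
  rw [sum_comm, sum_comm (s := range J) (γ := ℕ) (f := fun j k =>
    ((M (j + 1) k - M j k) * conj (g (j + 1) k - g j k)).re)]
  simp only [hx, sum_neg_distrib]
  ring

theorem sq_norm_sub_sq_norm (a b : ℂ) : ‖a‖ ^ 2 - ‖b‖ ^ 2 = ((a + b) * conj (a - b)).re := by
  simp only [Complex.sq_norm, normSq_apply, mul_re, add_re, add_im, conj_re, conj_im, sub_re,
    sub_im]
  ring

theorem gradSq_sub_gradSq (Δx Δy : ℝ) (J K : ℕ) (W V : ℕ → ℕ → ℂ)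
    (hJ : ∀ k, W J k = V J k) (hK : ∀ j, W j K = V j K) :
    gradSq Δx Δy J K W - gradSq Δx Δy J K V =
      -2 * (Δx * Δy) * ∑ j ∈ range J, ∑ k ∈ range K,
        (delta2 Δx Δy (fun j k => (W j k + V j k) / 2) j k * conj (W j k - V j k)).re := by
  have hdiff (w₁ w₀ v₁ v₀ : ℂ) (h : ℝ) :
      ‖(w₁ - w₀) / (h : ℂ)‖ ^ 2 - ‖(v₁ - v₀) / (h : ℂ)‖ ^ 2 =
        2 * (((w₁ + v₁) / 2 - (w₀ + v₀) / 2) * conj ((w₁ - v₁) - (w₀ - v₀))).re / h ^ 2 := by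
    rw [norm_div, norm_div, div_pow, div_pow, ← sub_div, sq_norm_sub_sq_norm, norm_real,
      Real.norm_eq_abs, sq_abs, sub_sub_sub_comm,
      show w₁ - w₀ + (v₁ - v₀) = ((2 : ℝ) : ℂ) * ((w₁ + v₁) / 2 - (w₀ + v₀) / 2) by push_cast; ring,
      mul_assoc, re_ofReal_mul]
  rw [sum_re_delta2_mul_conj _ _ _ _ _ _ (fun k => sub_eq_zero.2 (hJ k))
    (fun j => sub_eq_zero.2 (hK j)), gradSq, gradSq, ← mul_sub, ← sum_sub_distrib]
  simp only [mul_neg, neg_mul, sum_neg_distrib, neg_neg, ← sum_sub_distrib, add_sub_add_comm, hdiff,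
    mul_sum]
  exact sum_congr rfl fun _ _ => sum_congr rfl fun _ _ => by ring

-- `2 Re (...) = (|a|² - |b|²)² + (|a|² + |b|²) |a - b|²`
theorem re_sub_mul_conj_cube_nonneg (a b : ℂ) :
    0 ≤ ((a - b) * conj (((‖a‖ ^ 2 : ℝ) : ℂ) * a - ((‖b‖ ^ 2 : ℝ) : ℂ) * b)).re := by
  simp only [Complex.sq_norm, normSq_apply, mul_re, mul_im, sub_re, sub_im, conj_re, conj_im,
    ofReal_re, ofReal_im]
  nlinarith [sq_nonneg (a.re ^ 2 + a.im ^ 2 - b.re ^ 2 - b.im ^ 2),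
    mul_nonneg (add_nonneg (add_nonneg (add_nonneg (sq_nonneg a.re) (sq_nonneg a.im))
        (sq_nonneg b.re)) (sq_nonneg b.im))
      (add_nonneg (sq_nonneg (a.re - b.re)) (sq_nonneg (a.im - b.im)))]

theorem sum_re_delta2_mul_conj_cube_nonpos (Δx Δy : ℝ) (J K : ℕ) (M : ℕ → ℕ → ℂ)
    (hJ : ∀ k, M J k = 0) (hK : ∀ j, M j K = 0) :
    ∑ j ∈ range J, ∑ k ∈ range K,
      (delta2 Δx Δy M j k * conj (((‖M j k‖ ^ 2 : ℝ) : ℂ) * M j k)).re ≤ 0 := by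
  rw [sum_re_delta2_mul_conj _ _ _ _ _ _ (fun k => by simp [hJ]) (fun j => by simp [hK]),
    neg_nonpos]
  exact sum_nonneg fun j _ => sum_nonneg fun k _ =>
    add_nonneg (div_nonneg (re_sub_mul_conj_cube_nonneg _ _) (sq_nonneg _))
      (div_nonneg (re_sub_mul_conj_cube_nonneg _ _) (sq_nonneg _))

theorem mul_sub_mul_le_sq_div_of_sq_le {lam ν s t : ℝ} (hν : 0 < ν) (hst : s ^ 2 ≤ t) :
    lam * s - ν * t ≤ lam ^ 2 / (4 * ν) := by
  rw [le_div_iff₀ (by positivity)]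
  nlinarith [sq_nonneg (lam - 2 * ν * s), mul_le_mul_of_nonneg_left hst (mul_nonneg hν.le hν.le)]

theorem sq_add_sq_div_two_sq_le (p q : ℝ) :
    ((p ^ 2 + q ^ 2) / 2) ^ 2 ≤ (p ^ 4 + p ^ 2 * q ^ 2 + q ^ 4) / 3 := by
  nlinarith [sq_nonneg (p ^ 2 - q ^ 2)]

-- `L` stands for `δ²U^{n+1/2}` at the grid point.
def cnfdResidual (lam ν ε τ : ℝ) (z w L : ℂ) : ℂ :=
  I * (z - w) / τ + L + lam * psi1 z w - ν * psi2 z w + I * ε * phi z w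

theorem cnfdResidual_eq_zero_iff {lam ν ε τ : ℝ} {z w L : ℂ} :
    cnfdResidual lam ν ε τ z w L = 0 ↔
      L = -(I * (z - w) / τ + lam * psi1 z w - ν * psi2 z w + I * ε * phi z w) := by
  rw [cnfdResidual]
  constructor <;> intro h <;> linear_combination h

theorem norm_pow_four (z : ℂ) : ‖z‖ ^ 4 = normSq z ^ 2 := by
  rw [← Complex.sq_norm, ← pow_mul]

theorem norm_pow_six (z : ℂ) : ‖z‖ ^ 6 = normSq z ^ 3 := by
  rw [← Complex.sq_norm, ← pow_mul]

theorem re_mul_conj_sub_of_cnfdResidual_eq_zero {lam ν ε τ : ℝ} {z w L : ℂ}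
    (h : cnfdResidual lam ν ε τ z w L = 0) :
    (L * conj (z - w)).re =
      -(lam * (‖z‖ ^ 4 - ‖w‖ ^ 4) / 4 - ν * (‖z‖ ^ 6 - ‖w‖ ^ 6) / 6 +
        ε * (‖(z + w) / 2‖ ^ 2 * (z * conj w).im)) := by
  rw [cnfdResidual_eq_zero_iff.1 h]
  simp only [psi1, psi2, phi, norm_pow_four, norm_pow_six, Complex.sq_norm, normSq_apply, mul_re,
    mul_im, add_re, add_im, sub_re, sub_im, neg_re, neg_im, div_re, div_im, I_re, I_im, conj_re,
    conj_im, ofReal_re, ofReal_im, re_ofNat, im_ofNat]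
  field_simp
  ring

theorem sq_norm_mul_im_of_cnfdResidual_eq_zero {lam ν ε τ : ℝ} {z w L : ℂ} (hτ : τ ≠ 0)
    (h : cnfdResidual lam ν ε τ z w L = 0) :
    ‖(z + w) / 2‖ ^ 2 * (z * conj w).im =
      τ * (L * conj (phi z w)).re +
        τ * (lam * ((‖z‖ ^ 2 + ‖w‖ ^ 2) / 2) - ν * ((‖z‖ ^ 4 + ‖z‖ ^ 2 * ‖w‖ ^ 2 + ‖w‖ ^ 4) / 3)) *
          ‖(z + w) / 2‖ ^ 4 := by
  rw [cnfdResidual_eq_zero_iff.1 h]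
  simp only [psi1, psi2, phi, map_mul, conj_ofReal, norm_pow_four, Complex.sq_norm, normSq_apply,
    mul_re, mul_im, add_re, add_im, sub_re, sub_im, neg_re, neg_im, div_re, div_im, I_re, I_im,
    conj_re, conj_im, ofReal_re, ofReal_im, re_ofNat, im_ofNat]
  field_simp
  ring

section Scheme

variable {Δx Δy : ℝ} {J K : ℕ} {lam ν ε τ : ℝ} {W V : ℕ → ℕ → ℂ}

theorem stepEq.cnfdResidual_eq_zero_or (hW : memX J K W) (hV : memX J K V)
    (h : stepEq Δx Δy J K lam ν ε τ W V) {j k : ℕ} (hj : j < J) (hk : k < K) :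
    cnfdResidual lam ν ε τ (W j k) (V j k) (delta2 Δx Δy (fun j k => (W j k + V j k) / 2) j k) = 0 ∨
      W j k = 0 ∧ V j k = 0 := by
  rcases Nat.eq_zero_or_pos j with rfl | hj0
  · exact .inr ⟨hW.1 k, hV.1 k⟩
  rcases Nat.eq_zero_or_pos k with rfl | hk0
  · exact .inr ⟨hW.2.2.1 j, hV.2.2.1 j⟩
  exact .inl (h j k hj0 (by omega) hk0 (by omega))

theorem energy_sub_energy_of_stepEq (hW : memX J K W) (hV : memX J K V)
    (h : stepEq Δx Δy J K lam ν ε τ W V) :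
    energy Δx Δy J K lam ν W - energy Δx Δy J K lam ν V =
      2 * ε * (Δx * Δy) * ∑ j ∈ range J, ∑ k ∈ range K,
        ‖(W j k + V j k) / 2‖ ^ 2 * (W j k * conj (V j k)).im := by
  have hpt : ∀ j ∈ range J, ∀ k ∈ range K,
      (delta2 Δx Δy (fun j k => (W j k + V j k) / 2) j k * conj (W j k - V j k)).re =
        -(lam * (‖W j k‖ ^ 4 - ‖V j k‖ ^ 4) / 4 - ν * (‖W j k‖ ^ 6 - ‖V j k‖ ^ 6) / 6 +
          ε * (‖(W j k + V j k) / 2‖ ^ 2 * (W j k * conj (V j k)).im)) := by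
    intro j hj k hk
    rcases h.cnfdResidual_eq_zero_or hW hV (mem_range.1 hj) (mem_range.1 hk) with hres | ⟨hWz, hVz⟩
    · exact re_mul_conj_sub_of_cnfdResidual_eq_zero hres
    · simp [hWz, hVz]
  rw [energy, energy, add_sub_add_comm, sub_sub_sub_comm,
    gradSq_sub_gradSq _ _ _ _ _ _ (fun k => (hW.2.1 k).trans (hV.2.1 k).symm)
      (fun j => (hW.2.2.2 j).trans (hV.2.2.2 j).symm),
    sum_congr rfl fun j hj => sum_congr rfl fun k hk => hpt j hj k hk]
  simp only [normP, mul_sum, ← sum_sub_distrib, ← sum_add_distrib]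
  exact sum_congr rfl fun _ _ => sum_congr rfl fun _ _ => by ring

theorem sum_sq_norm_mul_im_le_of_stepEq (hν : 0 < ν) (hτ : 0 < τ) (hW : memX J K W)
    (hV : memX J K V) (h : stepEq Δx Δy J K lam ν ε τ W V) :
    ∑ j ∈ range J, ∑ k ∈ range K, ‖(W j k + V j k) / 2‖ ^ 2 * (W j k * conj (V j k)).im ≤
      τ * (lam ^ 2 / (4 * ν)) * ∑ j ∈ range J, ∑ k ∈ range K, ‖(W j k + V j k) / 2‖ ^ 4 := by
  set M : ℕ → ℕ → ℂ := fun j k => (W j k + V j k) / 2 with hM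
  set c : ℕ → ℕ → ℝ := fun j k => lam * ((‖W j k‖ ^ 2 + ‖V j k‖ ^ 2) / 2) -
    ν * ((‖W j k‖ ^ 4 + ‖W j k‖ ^ 2 * ‖V j k‖ ^ 2 + ‖V j k‖ ^ 4) / 3)
  have hpt : ∀ j ∈ range J, ∀ k ∈ range K, ‖M j k‖ ^ 2 * (W j k * conj (V j k)).im =
      τ * (delta2 Δx Δy M j k * conj (((‖M j k‖ ^ 2 : ℝ) : ℂ) * M j k)).re +
        τ * c j k * ‖M j k‖ ^ 4 := by
    intro j hj k hk
    rcases h.cnfdResidual_eq_zero_or hW hV (mem_range.1 hj) (mem_range.1 hk) with hres | ⟨hWz, hVz⟩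
    · exact sq_norm_mul_im_of_cnfdResidual_eq_zero hτ.ne' hres
    · simp [hM, hWz, hVz]
  have hlap := sum_re_delta2_mul_conj_cube_nonpos Δx Δy J K M
    (fun k => by simp [hM, hW.2.1 k, hV.2.1 k]) (fun j => by simp [hM, hW.2.2.2 j, hV.2.2.2 j])
  have hreact (j k : ℕ) : c j k ≤ lam ^ 2 / (4 * ν) :=
    mul_sub_mul_le_sq_div_of_sq_le hν (sq_add_sq_div_two_sq_le _ _)
  calc ∑ j ∈ range J, ∑ k ∈ range K, ‖M j k‖ ^ 2 * (W j k * conj (V j k)).im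
      = τ * ∑ j ∈ range J, ∑ k ∈ range K,
            (delta2 Δx Δy M j k * conj (((‖M j k‖ ^ 2 : ℝ) : ℂ) * M j k)).re +
          τ * ∑ j ∈ range J, ∑ k ∈ range K, c j k * ‖M j k‖ ^ 4 := by
        simp only [sum_congr rfl fun j hj => sum_congr rfl fun k hk => hpt j hj k hk, mul_sum,
          sum_add_distrib, mul_assoc]
    _ ≤ τ * 0 + τ * ∑ j ∈ range J, ∑ k ∈ range K, lam ^ 2 / (4 * ν) * ‖M j k‖ ^ 4 := by
        gcongr with j _ k _
        exact hreact j k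
    _ = τ * (lam ^ 2 / (4 * ν)) * ∑ j ∈ range J, ∑ k ∈ range K, ‖M j k‖ ^ 4 := by
        simp only [mul_zero, zero_add, mul_sum, mul_assoc]

end Scheme

theorem stmt9_general (J K : ℕ) (a b c d : ℝ) (hab : a < b) (hcd : c < d)
    (Δx Δy : ℝ) (hΔx : Δx = (b - a) / J) (hΔy : Δy = (d - c) / K)
    (lam ν ε τ : ℝ) (hν : 0 < ν) (hε : 0 ≤ ε) (hτ : 0 < τ)
    (N : ℕ) (U : ℕ → ℕ → ℕ → ℂ) (hU : isCNFD Δx Δy J K lam ν ε τ N U)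
    (n : ℕ) (hn : n < N) :
    energy Δx Δy J K lam ν (U (n + 1)) - energy Δx Δy J K lam ν (U n) ≤
      lam ^ 2 * ε * τ / (2 * ν) *
        normP Δx Δy J K 4 (fun j k => (U (n + 1) j k + U n j k) / 2) := by
  obtain ⟨hmem, hstep⟩ := hU
  have hW := hmem (n + 1) hn
  have hV := hmem n hn.le
  have hcell : 0 ≤ Δx * Δy := by
    rw [hΔx, hΔy]
    exact mul_nonneg (div_nonneg (sub_nonneg.2 hab.le) J.cast_nonneg)
      (div_nonneg (sub_nonneg.2 hcd.le) K.cast_nonneg)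
  rw [energy_sub_energy_of_stepEq hW hV (hstep n hn), normP]
  calc 2 * ε * (Δx * Δy) * ∑ j ∈ range J, ∑ k ∈ range K,
        ‖(U (n + 1) j k + U n j k) / 2‖ ^ 2 * (U (n + 1) j k * conj (U n j k)).im
      ≤ 2 * ε * (Δx * Δy) * (τ * (lam ^ 2 / (4 * ν)) *
          ∑ j ∈ range J, ∑ k ∈ range K, ‖(U (n + 1) j k + U n j k) / 2‖ ^ 4) := by
        gcongr
        exact sum_sq_norm_mul_im_le_of_stepEq hν hτ hW hV (hstep n hn)
    _ = _ := by
        field_simp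
        ring

/-- one-step discrete energy estimate. -/
theorem stmt9 (J K : ℕ) (hJ : 2 ≤ J) (hK : 2 ≤ K) (a b c d : ℝ) (hab : a < b) (hcd : c < d)
    (Δx Δy : ℝ) (hΔx : Δx = (b - a) / J) (hΔy : Δy = (d - c) / K)
    (lam ν ε τ : ℝ) (hν : 0 < ν) (hε : 0 ≤ ε) (hτ : 0 < τ)
    (N : ℕ) (U : ℕ → ℕ → ℕ → ℂ) (hU : isCNFD Δx Δy J K lam ν ε τ N U)
    (n : ℕ) (hn : n < N) :
    energy Δx Δy J K lam ν (U (n + 1)) - energy Δx Δy J K lam ν (U n) ≤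
      lam ^ 2 * ε * τ / (2 * ν) *
        normP Δx Δy J K 4 (fun j k => (U (n + 1) j k + U n j k) / 2) :=
  stmt9_general J K a b c d hab hcd Δx Δy hΔx hΔy lam ν ε τ hν hε hτ N U hU n hn
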